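/- arXiv:1908.03207 — 2 statements merged into one kernel-verified Lean document; each statement's English description precedes it below -/
import Mathlib

section
/- For complex numbers x, y, t with |xt| < 1 and |yt| ≤ 1 (or as formal power series in t), the generating function ∑_{n=0}^∞ p_n(x,y) t^n / (q;q)_n = (yt;q)_∞ / (xt;q)_∞ holds, where p_n(x,y) = ∏_{j=0}^{n-1}(x - q^j y). -/
open Finset

noncomputable def qPoch (q a : ℂ) (n : ℕ) : ℂ := ∏ j ∈ Finset.range n, (1 - a * q ^ j)

noncomputable def qPochInf (q a : ℂ) : ℂ := ∏' j : ℕ, (1 - a * q ^ j)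

noncomputable def cauchyP (q x y : ℂ) (n : ℕ) : ℂ := ∏ j ∈ Finset.range n, (x - q ^ j * y)

noncomputable def qBinom (q : ℂ) (n k : ℕ) : ℂ := qPoch q q n / (qPoch q q k * qPoch q q (n - k))

noncomputable def qDeriv (q : ℂ) (f : ℂ → ℂ) : ℂ → ℂ := fun x => (f x - f (q * x)) / x

noncomputable def qTheta (q : ℂ) (f : ℂ → ℂ → ℂ) : ℂ → ℂ → ℂ :=
  fun x y => (f (q⁻¹ * x) y - f x (q * y)) / (q⁻¹ * x - y)

/-- `₁Φ₁(a; 0; q, z)` -/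
noncomputable def phi11 (q a z : ℂ) : ℂ :=
  ∑' m : ℕ, (-1) ^ m * q ^ m.choose 2 * qPoch q a m * z ^ m / qPoch q q m

/-- generalized Cauchy polynomials `p_n(x,y,a)` -/
noncomputable def genCauchy (q a x y : ℂ) (n : ℕ) : ℂ :=
  ∑ k ∈ Finset.range (n + 1),
    qBinom q n k * (-1) ^ k * q ^ k.choose 2 * qPoch q a k * x ^ (n - k) * y ^ k

/-- generalized Hahn polynomials `h_n(x,y,a,b|q)` -/
noncomputable def hahn (q x y a b : ℂ) (n : ℕ) : ℂ :=
  ∑ k ∈ Finset.range (n + 1),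
    qBinom q n k * (-1) ^ k * q ^ k.choose 2 * b ^ k * qPoch q a k * cauchyP q y x (n - k)

open Filter Topology

/-!
Write `F(s) = ∑ pₙ(x,y) sⁿ / (q;q)ₙ`. Since `pₙ₊₁ = pₙ (x - qⁿ y)` and `(q;q)ₙ₊₁ = (q;q)ₙ (1 - qⁿ⁺¹)`,
comparing coefficients gives the functional equation `(1 - x s) F(s) = (1 - y s) F(q s)`.
Iterating it `N` times, `(xt;q)_N F(t) = (yt;q)_N F(qᴺ t)`, and letting `N → ∞` with
`F(qᴺ t) → F(0) = 1` yields `(xt;q)_∞ F(t) = (yt;q)_∞`.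
-/

theorem summable_of_succ_eq_mul_of_tendsto {R : Type*} [NormedRing R] [CompleteSpace R]
    {f c : ℕ → R} {l : R} (hl : ‖l‖ < 1) (hc : Tendsto c atTop (𝓝 l))
    (hf : ∀ n, f (n + 1) = c n * f n) : Summable f := by
  obtain ⟨r, hlr, hr⟩ := exists_between hl
  refine summable_of_ratio_norm_eventually_le hr ?_
  filter_upwards [hc.norm.eventually_le_const hlr] with n hn
  rw [hf]
  exact (norm_mul_le _ _).trans (by gcongr)

theorem tendsto_tsum_mul_pow_nhdsWithin_zero {f : ℕ → ℂ} (hf : Summable f) :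
    Tendsto (fun z => ∑' n, f n * z ^ n) (𝓝[Metric.closedBall 0 1] 0) (𝓝 (f 0)) := by
  have hlim : ∑' n, f n * 0 ^ n = f 0 := by
    rw [tsum_eq_single 0 fun n hn => by simp [hn]]
    simp
  rw [← hlim]
  refine tendsto_tsum_of_dominated_convergence (summable_norm_iff.mpr hf)
    (fun n => ((continuous_pow n).tendsto 0).mono_left nhdsWithin_le_nhds |>.const_mul (f n)) ?_
  filter_upwards [self_mem_nhdsWithin] with z hz n
  rw [norm_mul, norm_pow]
  exact mul_le_of_le_one_right (norm_nonneg _)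
    (pow_le_one₀ (norm_nonneg _) (mem_closedBall_zero_iff.mp hz))

section
variable {q : ℂ}

theorem norm_mul_mul_lt_one {x s : ℂ} (hq : ‖q‖ ≤ 1) (hxs : ‖x * s‖ < 1) :
    ‖x * (q * s)‖ < 1 := by
  rw [mul_left_comm, norm_mul]
  exact (mul_le_of_le_one_left (norm_nonneg _) hq).trans_lt hxs

theorem one_sub_mul_pow_ne_zero {a : ℂ} (hq : ‖q‖ ≤ 1) (ha : ‖a‖ < 1) (j : ℕ) :
    1 - a * q ^ j ≠ 0 := by
  refine sub_ne_zero.mpr fun h => ?_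
  have : ‖a * q ^ j‖ < 1 := by
    rw [norm_mul, norm_pow]
    exact (mul_le_of_le_one_right (norm_nonneg _) (pow_le_one₀ (norm_nonneg _) hq)).trans_lt ha
  simp [← h] at this

theorem qPoch_succ (a : ℂ) (n : ℕ) : qPoch q a (n + 1) = qPoch q a n * (1 - a * q ^ n) :=
  prod_range_succ _ _

theorem summable_norm_neg_mul_pow (hq : ‖q‖ < 1) (a : ℂ) : Summable fun j => ‖-(a * q ^ j)‖ := by
  simpa [norm_mul, norm_pow] using (summable_geometric_of_lt_one (norm_nonneg q) hq).mul_left ‖a‖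

theorem hasProd_qPochInf (hq : ‖q‖ < 1) (a : ℂ) :
    HasProd (fun j => 1 - a * q ^ j) (qPochInf q a) := by
  simpa [qPochInf, sub_eq_add_neg] using
    (multipliable_one_add_of_summable (summable_norm_neg_mul_pow hq a)).hasProd

theorem qPochInf_ne_zero (hq : ‖q‖ < 1) {a : ℂ} (ha : ‖a‖ < 1) : qPochInf q a ≠ 0 := by
  simpa [qPochInf, sub_eq_add_neg] using tprod_one_add_ne_zero_of_summable
    (fun j => by simpa [sub_eq_add_neg] using one_sub_mul_pow_ne_zero hq.le ha j)
    (summable_norm_neg_mul_pow hq a)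

noncomputable def cauchyCoeff (q x y : ℂ) (n : ℕ) : ℂ := cauchyP q x y n / qPoch q q n

noncomputable def cauchyGen (q x y s : ℂ) : ℂ := ∑' n, cauchyCoeff q x y n * s ^ n

variable (x y : ℂ)

theorem cauchyCoeff_zero : cauchyCoeff q x y 0 = 1 := by
  simp [cauchyCoeff, cauchyP, qPoch]

theorem cauchyCoeff_succ (n : ℕ) :
    cauchyCoeff q x y (n + 1) = (x - q ^ n * y) / (1 - q * q ^ n) * cauchyCoeff q x y n := by
  unfold cauchyCoeff cauchyP qPoch
  rw [prod_range_succ, prod_range_succ, mul_div_mul_comm, mul_comm]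

theorem summable_cauchyCoeff_mul_pow (hq : ‖q‖ < 1) {s : ℂ} (hxs : ‖x * s‖ < 1) :
    Summable fun n => cauchyCoeff q x y n * s ^ n := by
  have hpow := tendsto_pow_atTop_nhds_zero_of_norm_lt_one hq
  have hratio : Tendsto (fun n => (x - q ^ n * y) / (1 - q * q ^ n) * s) atTop (𝓝 (x * s)) := by
    simpa using ((tendsto_const_nhds.sub (hpow.mul_const y)).div
      (tendsto_const_nhds.sub (hpow.const_mul q)) (by simp : (1 : ℂ) - q * 0 ≠ 0)).mul_const s
  refine summable_of_succ_eq_mul_of_tendsto hxs hratio fun n => ?_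
  rw [cauchyCoeff_succ, pow_succ]
  ring

theorem cauchyGen_functional_eq (hq : ‖q‖ < 1) {s : ℂ} (hxs : ‖x * s‖ < 1) :
    (1 - x * s) * cauchyGen q x y s = (1 - y * s) * cauchyGen q x y (q * s) := by
  have hf := summable_cauchyCoeff_mul_pow x y hq hxs
  have hg := summable_cauchyCoeff_mul_pow x y hq (norm_mul_mul_lt_one hq.le hxs)
  have hcoeff (n : ℕ) :
      cauchyCoeff q x y (n + 1) * s ^ (n + 1) - cauchyCoeff q x y (n + 1) * (q * s) ^ (n + 1) =
        x * s * (cauchyCoeff q x y n * s ^ n) - y * s * (cauchyCoeff q x y n * (q * s) ^ n) := by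
    have hratio := div_mul_cancel₀ (x - q ^ n * y) (one_sub_mul_pow_ne_zero hq.le hq n)
    rw [cauchyCoeff_succ]
    linear_combination (cauchyCoeff q x y n * s ^ (n + 1)) * hratio
  have hdiff : cauchyGen q x y s - cauchyGen q x y (q * s) =
      x * s * cauchyGen q x y s - y * s * cauchyGen q x y (q * s) := by
    rw [cauchyGen, cauchyGen, ← hf.tsum_sub hg, (hf.sub hg).tsum_eq_zero_add]
    simp only [cauchyCoeff_zero, pow_zero, sub_self, zero_add, hcoeff]
    rw [(hf.mul_left _).tsum_sub (hg.mul_left _), tsum_mul_left, tsum_mul_left]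
  linear_combination hdiff

theorem qPoch_mul_cauchyGen (hq : ‖q‖ < 1) {t : ℂ} (hxt : ‖x * t‖ < 1) (N : ℕ) :
    qPoch q (x * t) N * cauchyGen q x y t = qPoch q (y * t) N * cauchyGen q x y (q ^ N * t) := by
  induction N with
  | zero => simp [qPoch]
  | succ N ih =>
    have hqN : ‖q ^ N‖ ≤ 1 := by
      rw [norm_pow]
      exact pow_le_one₀ (norm_nonneg q) hq.le
    have hstep := cauchyGen_functional_eq x y hq (norm_mul_mul_lt_one hqN hxt)
    rw [← mul_assoc q, ← pow_succ'] at hstep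
    rw [qPoch_succ, qPoch_succ]
    linear_combination (1 - x * t * q ^ N) * ih + qPoch q (y * t) N * hstep

theorem tendsto_cauchyGen_pow_mul (hq : ‖q‖ < 1) {t : ℂ} (hxt : ‖x * t‖ < 1) :
    Tendsto (fun N => cauchyGen q x y (q ^ N * t)) atTop (𝓝 1) := by
  have hpow : Tendsto (fun N => q ^ N) atTop (𝓝[Metric.closedBall 0 1] 0) :=
    tendsto_nhdsWithin_iff.mpr ⟨tendsto_pow_atTop_nhds_zero_of_norm_lt_one hq,
      Eventually.of_forall fun N => by
        rw [mem_closedBall_zero_iff, norm_pow]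
        exact pow_le_one₀ (norm_nonneg q) hq.le⟩
  have := (tendsto_tsum_mul_pow_nhdsWithin_zero
    (summable_cauchyCoeff_mul_pow x y hq hxt)).comp hpow
  simp only [cauchyCoeff_zero, pow_zero, mul_one] at this
  refine this.congr fun N => tsum_congr fun n => ?_
  simp only [mul_pow]
  ring

end

theorem stmt2_general (q : ℝ) (hq0 : 0 < q) (hq1 : q < 1) (x y t : ℂ)
    (hxt : ‖x * t‖ < 1) :
    ∑' n : ℕ, cauchyP (q : ℂ) x y n * t ^ n / qPoch (q : ℂ) (q : ℂ) n =
      qPochInf (q : ℂ) (y * t) / qPochInf (q : ℂ) (x * t) := by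
  have hq : ‖(q : ℂ)‖ < 1 := by rwa [Complex.norm_real, Real.norm_of_nonneg hq0.le]
  have hlimx : Tendsto (fun N => qPoch (q : ℂ) (x * t) N * cauchyGen q x y t) atTop
      (𝓝 (qPochInf q (x * t) * cauchyGen q x y t)) :=
    (hasProd_qPochInf hq (x * t)).tendsto_prod_nat.mul_const _
  have hlimy : Tendsto (fun N => qPoch (q : ℂ) (x * t) N * cauchyGen q x y t) atTop
      (𝓝 (qPochInf q (y * t) * 1)) :=
    ((hasProd_qPochInf hq (y * t)).tendsto_prod_nat.mul
      (tendsto_cauchyGen_pow_mul x y hq hxt)).congr fun N =>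
        (qPoch_mul_cauchyGen x y hq hxt N).symm
  have hprod := tendsto_nhds_unique hlimx hlimy
  have hgen : ∑' n : ℕ, cauchyP (q : ℂ) x y n * t ^ n / qPoch (q : ℂ) (q : ℂ) n =
      cauchyGen q x y t :=
    tsum_congr fun n => mul_div_right_comm _ _ _
  rw [hgen, eq_div_iff (qPochInf_ne_zero hq hxt)]
  linear_combination hprod

theorem stmt2 (q : ℝ) (hq0 : 0 < q) (hq1 : q < 1) (x y t : ℂ)
    (hxt : ‖x * t‖ < 1) (hyt : ‖y * t‖ ≤ 1) :
    ∑' n : ℕ, cauchyP (q : ℂ) x y n * t ^ n / qPoch (q : ℂ) (q : ℂ) n =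
      qPochInf (q : ℂ) (y * t) / qPochInf (q : ℂ) (x * t) :=
  stmt2_general q hq0 hq1 x y t hxt
end

section
/- (Operational formula for generalized Hahn polynomials) Define h_n(x,y,a,b|q) := ∑_{k=0}^n \binom{n}{k}_q (−1)^k q^{\binom{k}{2}} b^k (a;q)_k p_{n−k}(y,x), and the operator L̃(a,b;θ_{xy}) := ∑_{k=0}^∞ q^{\binom{k}{2}} (a;q)_k (b θ_{xy})^k/(q;q)_k. Then L̃(a,b;θ_{xy}){p_n(y,x)} = h_n(x,y,a,b|q). -/
open Finset

/-!
Away from the lines `x = q^m y`, where its difference quotients are undefined, `θ_{xy}` lowers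
the degree of the Cauchy polynomial: `θ_{xy} p_m(y,x) = -(1 - q^m) p_{m-1}(y,x)`. Iterating,
`θ_{xy}^k p_n(y,x) = (-1)^k (1 - q^n) ⋯ (1 - q^{n-k+1}) p_{n-k}(y,x)`, which vanishes for `k > n`;
dividing the product by `(q;q)_k` gives the `q`-binomial coefficient, and the operator series
becomes the finite sum defining `h_n`.
-/

theorem cauchyP_succ' (q x y : ℂ) (m : ℕ) :
    cauchyP q x y (m + 1) = (x - y) * cauchyP q x (q * y) m := by
  simp only [cauchyP, prod_range_succ', pow_succ]
  ring_nf

theorem cauchyP_mul_mul (q c x y : ℂ) (m : ℕ) :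
    cauchyP q (c * x) (c * y) m = c ^ m * cauchyP q x y m := by
  have factor (j : ℕ) : c * x - q ^ j * (c * y) = c * (x - q ^ j * y) := by ring
  simp only [cauchyP, factor, prod_mul_distrib, prod_const, card_range]

section

variable {q : ℂ}

theorem inv_mul_ne_zpow_mul (hq : q ≠ 0) {x y : ℂ} (h : ∀ m : ℤ, x ≠ q ^ m * y) (m : ℤ) :
    q⁻¹ * x ≠ q ^ m * y := fun hm => h (m + 1) <| by
  rw [zpow_add_one₀ hq, mul_right_comm, ← hm]; field_simp

theorem ne_zpow_mul_mul (hq : q ≠ 0) {x y : ℂ} (h : ∀ m : ℤ, x ≠ q ^ m * y) (m : ℤ) :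
    x ≠ q ^ m * (q * y) := fun hm => h (m + 1) <| by
  rw [hm, zpow_add_one₀ hq]; ring

theorem qTheta_const_mul_cauchyP (hq : q ≠ 0) {x y : ℂ} (hxy : x ≠ q * y) (c : ℂ) (m : ℕ) :
    qTheta q (fun u v => c * cauchyP q v u m) x y = -c * (1 - q ^ m) * cauchyP q y x (m - 1) := by
  have hd : q⁻¹ * x - y ≠ 0 := by
    rw [sub_ne_zero]; rintro rfl; exact hxy (mul_inv_cancel_left₀ hq x).symm
  rcases m with _ | m
  · simp [qTheta, cauchyP]
  have hx : x = q * (q⁻¹ * x) := (mul_inv_cancel_left₀ hq x).symm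
  have left : cauchyP q y (q⁻¹ * x) (m + 1) = (y - q⁻¹ * x) * cauchyP q y x m := by
    rw [cauchyP_succ', ← hx]
  have right : cauchyP q (q * y) x (m + 1) = q ^ (m + 1) * cauchyP q y (q⁻¹ * x) (m + 1) := by
    conv_lhs => rw [hx]
    exact cauchyP_mul_mul q q y (q⁻¹ * x) (m + 1)
  simp only [qTheta, right, left, Nat.add_sub_cancel]
  rw [div_eq_iff hd]
  ring

theorem qTheta_iterate_cauchyP (hq : q ≠ 0) (n k : ℕ) {x y : ℂ} (hxy : ∀ m : ℤ, x ≠ q ^ m * y) :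
    (qTheta q)^[k] (fun u v => cauchyP q v u n) x y =
      (-1) ^ k * (∏ j ∈ range k, (1 - q ^ (n - j))) * cauchyP q y x (n - k) := by
  induction k generalizing x y with
  | zero => simp
  | succ k ih =>
    have step : (qTheta q)^[k + 1] (fun u v => cauchyP q v u n) x y =
        qTheta q (fun u v => ((-1) ^ k * ∏ j ∈ range k, (1 - q ^ (n - j))) * cauchyP q v u (n - k))
          x y := by
      rw [Function.iterate_succ_apply']
      simp only [qTheta, ih (inv_mul_ne_zpow_mul hq hxy), ih (ne_zpow_mul_mul hq hxy)]
    rw [step, qTheta_const_mul_cauchyP hq (by simpa using hxy 1), prod_range_succ, Nat.sub_sub]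
    ring

theorem qTheta_iterate_cauchyP_of_lt (hq : q ≠ 0) {n k : ℕ} (hnk : n < k) {x y : ℂ}
    (hxy : ∀ m : ℤ, x ≠ q ^ m * y) :
    (qTheta q)^[k] (fun u v => cauchyP q v u n) x y = 0 := by
  -- the factor `j = n` of the product is `1 - q ^ 0 = 0`
  rw [qTheta_iterate_cauchyP hq n k hxy, prod_eq_zero (mem_range.2 hnk) (by simp)]
  ring

theorem qPoch_self_ne_zero (hq : ‖q‖ < 1) (m : ℕ) : qPoch q q m ≠ 0 :=
  prod_ne_zero_iff.2 fun j _ h => by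
    have : ‖q ^ (j + 1)‖ < 1 := by
      rw [norm_pow]; exact pow_lt_one₀ (norm_nonneg q) hq j.succ_ne_zero
    rw [← pow_succ', sub_eq_zero] at h
    rw [← h, norm_one] at this
    exact lt_irrefl _ this

theorem qPoch_self_eq_mul_prod (q : ℂ) {n k : ℕ} (hk : k ≤ n) :
    qPoch q q n = qPoch q q (n - k) * ∏ j ∈ range k, (1 - q ^ (n - j)) := by
  induction k with
  | zero => simp
  | succ k ih =>
    obtain ⟨m, hm⟩ : ∃ m, n - k = m + 1 := ⟨n - (k + 1), by omega⟩
    rw [ih (by omega), prod_range_succ, hm, show n - (k + 1) = m by omega, ← mul_assoc]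
    simp only [qPoch, prod_range_succ, ← pow_succ']
    ring

theorem qBinom_eq_prod_div (q : ℂ) {n k : ℕ} (hk : k ≤ n) (h : qPoch q q (n - k) ≠ 0) :
    qBinom q n k = (∏ j ∈ range k, (1 - q ^ (n - j))) / qPoch q q k := by
  rw [qBinom, qPoch_self_eq_mul_prod q hk, mul_comm (qPoch q q k), mul_div_mul_left _ _ h]

end

theorem stmt16 (q : ℝ) (hq0 : 0 < q) (hq1 : q < 1) (a b : ℂ) (n : ℕ) (x y : ℂ)
    (hxy : ∀ m : ℤ, x ≠ (q : ℂ) ^ m * y) :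
    ∑' k : ℕ, (q : ℂ) ^ k.choose 2 * qPoch (q : ℂ) a k * b ^ k / qPoch (q : ℂ) (q : ℂ) k *
        ((qTheta (q : ℂ))^[k] (fun u v => cauchyP (q : ℂ) v u n) x y) =
      hahn (q : ℂ) x y a b n := by
  have hq : (q : ℂ) ≠ 0 := mod_cast hq0.ne'
  have hnorm : ‖(q : ℂ)‖ < 1 := by rwa [Complex.norm_real, Real.norm_of_nonneg hq0.le]
  rw [tsum_eq_sum (s := range (n + 1)) fun k hk => by
    rw [qTheta_iterate_cauchyP_of_lt hq (by simpa using hk) hxy, mul_zero]]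
  refine sum_congr rfl fun k hk => ?_
  have hkn : k ≤ n := Nat.lt_succ_iff.1 (mem_range.1 hk)
  rw [qTheta_iterate_cauchyP hq n k hxy, qBinom_eq_prod_div _ hkn (qPoch_self_ne_zero hnorm _)]
  have := qPoch_self_ne_zero hnorm k
  field_simp
end
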